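/- Let L be a Lie superalgebra over R, let P : L → L be an R-linear parity-preserving projector whose image V = P(L) is an abelian subalgebra and which satisfies the distributive law, and let Δ ∈ L be odd. Say an element z ∈ L has order ≤ r with respect to V if every (r+1)-fold commutator [⋯[[z,a₁],a₂],…,a_{r+1}] with a₁,…,a_{r+1} ∈ V vanishes. If Δ² = (1/2)[Δ,Δ] has order ≤ r with respect to V, then the higher derived brackets of Δ satisfy the generalized Jacobi identities of all orders n > r: Jⁿ_Δ(a₁,…,aₙ) = 0 for all n ≥ r+1 and all homogeneous a₁,…,aₙ ∈ V. -/

import Mathlib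

/-!
Write `[Δ, a_S]` for the iterated bracket of `Δ` with the `aᵢ`, `i ∈ S`, in increasing order.
By the graded Leibniz rule, `[[Δ,Δ], a₁, …, aₙ]` is a signed sum over the subsets `S` of
`[[Δ, a_S], [Δ, a_{Sᶜ}]]`. The distributive law splits `P` of each term into
`P[P[Δ, a_S], [Δ, a_{Sᶜ}]]` and its mirror image; as `V` is abelian, `P[Δ, a_S] ∈ V` commutes
past the `a_{Sᶜ} ∈ V`, which turns the first into `±P[[Δ, P[Δ, a_S]], a_{Sᶜ}]`, the `S`-summand
of the Jacobiator. Each summand thus appears twice (from `S` and from `Sᶜ`), so `Jⁿ_Δ` is the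
`n`-th derived bracket of `Δ² = ½[Δ,Δ]`, which vanishes for `n > r`.
-/

open Finset

/-- The sign `(-1)^e` for a parity `e : ZMod 2`, as an element of `R`. -/
def sgn (R : Type*) [CommRing R] (e : ZMod 2) : R := if e = 0 then 1 else -1

variable {R : Type*} [CommRing R] {L : Type*} [AddCommGroup L] [Module R L]

/-- Iterated bracket `[...[[z,a₁],a₂],...,aₙ]`. -/
def iterBr (br : L →ₗ[R] L →ₗ[R] L) : L → List L → L
  | z, [] => z
  | z, a :: rest => iterBr br (br z a) rest

/-- The `n`-th higher derived bracket `{a₁,...,aₙ}_Δ := P [...[[Δ,a₁],a₂],...,aₙ]`. -/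
def dbr (br : L →ₗ[R] L →ₗ[R] L) (P : L →ₗ[R] L) (Δ : L) (n : ℕ) (a : Fin n → L) : L :=
  P (iterBr br Δ (List.ofFn a))

/-- The exponent of the Koszul sign of the `(k,l)`-shuffle determined by the
`k`-element subset `S ⊆ {0,...,n-1}` on homogeneous arguments of parities `p i`:
a factor `(-1)^{p i · p j}` for each pair `i < j` with `i ∉ S`, `j ∈ S`. -/
def koszulExp {n : ℕ} (p : Fin n → ZMod 2) (S : Finset (Fin n)) : ZMod 2 :=
  ∑ j ∈ S, ∑ i ∈ Sᶜ.filter (fun i => i < j), p i * p j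

/-- The `n`-th Jacobiator
`Jⁿ(a₁,…,aₙ) = Σ_{k+l=n} Σ_{(k,l)-shuffles σ} (−1)^α {{a_{σ(1)},…,a_{σ(k)}}, a_{σ(k+1)},…,a_{σ(n)}}`
of a family of `n`-ary operations, the sum over `(k,l)`-shuffles being realized as a sum
over the `k`-element subsets `S` of indices (listed in increasing order inside each group),
with `(−1)^α` the Koszul sign of the shuffle on arguments of parities `p i`. -/
def Jac (R : Type*) [CommRing R] {M : Type*} [AddCommGroup M] [Module R M]
    (br : ∀ n : ℕ, (Fin n → M) → M) (n : ℕ) (p : Fin n → ZMod 2) (a : Fin n → M) : M :=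
  ∑ S : Finset (Fin n),
    sgn R (koszulExp p S) •
      br (Sᶜ.card + 1)
        (Fin.cons (br S.card (fun i => a ((S.orderIsoOfFin rfl i : Fin n))))
          (fun i => a ((Sᶜ.orderIsoOfFin rfl i : Fin n))))

lemma sgn_add (x y : ZMod 2) : sgn R (x + y) = sgn R x * sgn R y := by
  obtain rfl | rfl : x = 0 ∨ x = 1 := by revert x; decide
  all_goals obtain rfl | rfl : y = 0 ∨ y = 1 := by revert y; decide
  all_goals simp [sgn, show (1 + 1 : ZMod 2) = 0 from rfl]

@[simp] lemma sgn_zero : sgn R 0 = 1 := if_pos rfl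

lemma neg_sgn (x : ZMod 2) : -sgn R x = sgn R (1 + x) := by
  rw [sgn_add, show sgn R 1 = -1 from if_neg one_ne_zero, neg_one_mul]

section IterBr

variable (br : L →ₗ[R] L →ₗ[R] L)

lemma iterBr_add (x y : L) (l : List L) :
    iterBr br (x + y) l = iterBr br x l + iterBr br y l := by
  induction l generalizing x y with
  | nil => rfl
  | cons a l ih => simp only [iterBr, map_add, LinearMap.add_apply, ih]

lemma iterBr_smul (c : R) (x : L) (l : List L) : iterBr br (c • x) l = c • iterBr br x l := by
  induction l generalizing x with
  | nil => rfl
  | cons a l ih => simp only [iterBr, map_smul, LinearMap.smul_apply, ih]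

lemma iterBr_zero (l : List L) : iterBr br 0 l = 0 := by
  simpa using iterBr_smul br 0 0 l

lemma iterBr_append (z : L) (l₁ l₂ : List L) :
    iterBr br z (l₁ ++ l₂) = iterBr br (iterBr br z l₁) l₂ := by
  induction l₁ generalizing z with
  | nil => rfl
  | cons a l ih => exact ih _

end IterBr

section SubsetsOfFin

variable {m : ℕ}

lemma Fin.sort_map_succEmb (T : Finset (Fin m)) :
    (T.map (Fin.succEmb m)).sort = T.sort.map Fin.succ :=
  ((Fin.strictMono_succ.strictMonoOn _).map_finsetSort (f := Fin.succEmb m)).symm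

lemma Fin.sort_insert_zero_map_succEmb (T : Finset (Fin m)) :
    (insert 0 (T.map (Fin.succEmb m))).sort = 0 :: T.sort.map Fin.succ := by
  rw [sort_insert _ (fun _ _ => Fin.zero_le _) (by simp [Fin.succ_ne_zero]), Fin.sort_map_succEmb]

lemma Fin.compl_map_succEmb (T : Finset (Fin m)) :
    (T.map (Fin.succEmb m))ᶜ = insert 0 (Tᶜ.map (Fin.succEmb m)) := by
  ext i
  induction i using Fin.cases <;> simp [Fin.succ_ne_zero]

lemma Fin.compl_insert_zero_map_succEmb (T : Finset (Fin m)) :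
    (insert 0 (T.map (Fin.succEmb m)))ᶜ = Tᶜ.map (Fin.succEmb m) := by
  rw [← compl_compl (Tᶜ.map _), Fin.compl_map_succEmb, compl_compl]

lemma Fin.sum_finset_succ {M : Type*} [AddCommMonoid M] (f : Finset (Fin (m + 1)) → M) :
    ∑ S, f S = ∑ T : Finset (Fin m), f (T.map (Fin.succEmb m))
      + ∑ T : Finset (Fin m), f (insert 0 (T.map (Fin.succEmb m))) := by
  classical
  have hpow : ∀ g : Finset (Fin (m + 1)) → M, ∑ t ∈ (univ.map (Fin.succEmb m)).powerset, g t
      = ∑ T : Finset (Fin m), g (T.map (Fin.succEmb m)) := by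
    intro g
    rw [map_eq_image, powerset_image,
      sum_image fun s _ t _ h => image_injective (Fin.succEmb m).injective h, powerset_univ]
    simp [map_eq_image]
  rw [← powerset_univ, Fin.univ_succ, cons_eq_insert, sum_powerset_insert (by simp)]
  exact congrArg₂ (· + ·) (hpow f) (hpow _)

lemma koszulExp_map_succEmb (q₀ : ZMod 2) (q : Fin m → ZMod 2) (T : Finset (Fin m)) :
    koszulExp (Fin.cons q₀ q) (T.map (Fin.succEmb m))
      = koszulExp q T + q₀ * ∑ j ∈ T, q j := by
  simp only [koszulExp, sum_filter, Fin.compl_map_succEmb, sum_map, mul_sum, ← sum_add_distrib]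
  refine sum_congr rfl fun j _ => ?_
  rw [sum_insert (by simp [Fin.succ_ne_zero]), sum_map]
  simp [Fin.succ_pos, add_comm]

lemma koszulExp_insert_zero_map_succEmb (q₀ : ZMod 2) (q : Fin m → ZMod 2) (T : Finset (Fin m)) :
    koszulExp (Fin.cons q₀ q) (insert 0 (T.map (Fin.succEmb m))) = koszulExp q T := by
  simp only [koszulExp, sum_filter, Fin.compl_insert_zero_map_succEmb]
  rw [sum_insert (by simp [Fin.succ_ne_zero]), sum_map]
  simp

end SubsetsOfFin

lemma koszulExp_add_koszulExp_compl {n : ℕ} (q : Fin n → ZMod 2) (S : Finset (Fin n)) :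
    koszulExp q S + koszulExp q Sᶜ = (∑ j ∈ S, q j) * ∑ i ∈ Sᶜ, q i := by
  simp only [koszulExp, compl_compl, sum_filter, sum_mul_sum]
  rw [sum_comm (s := Sᶜ), ← sum_add_distrib]
  refine sum_congr rfl fun j hj => ?_
  rw [← sum_add_distrib]
  refine sum_congr rfl fun i hi => ?_
  rcases (ne_of_mem_of_not_mem hj (mem_compl.1 hi)).lt_or_gt with h | h <;>
    simp [h, h.not_gt, mul_comm]

structure IsLieSuperBracket (grading : ZMod 2 → Submodule R L) (br : L →ₗ[R] L →ₗ[R] L) :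
    Prop where
  mem_grading : ∀ (i j : ZMod 2) (a b : L), a ∈ grading i → b ∈ grading j →
    br a b ∈ grading (i + j)
  skew : ∀ (i j : ZMod 2) (a b : L), a ∈ grading i → b ∈ grading j →
    br a b = (-(sgn R (i * j))) • br b a
  jacobi : ∀ (i j : ZMod 2) (a b c : L), a ∈ grading i → b ∈ grading j →
    br a (br b c) = br (br a b) c + (sgn R (i * j)) • br b (br a c)

namespace IsLieSuperBracket

variable {grading : ZMod 2 → Submodule R L} {br : L →ₗ[R] L →ₗ[R] L}

lemma iterBr_mem (hL : IsLieSuperBracket grading br) {ι : Type*} {v : ι → L} {q : ι → ZMod 2}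
    (hv : ∀ i, v i ∈ grading (q i)) (l : List ι) {z : L} {pz : ZMod 2} (hz : z ∈ grading pz) :
    iterBr br z (l.map v) ∈ grading (pz + (l.map q).sum) := by
  induction l generalizing z pz with
  | nil => simpa [iterBr] using hz
  | cons i l ih => simpa [iterBr, add_assoc] using ih (hL.mem_grading _ _ _ _ hz (hv i))

lemma br_iterBr_of_br_eq_zero (hL : IsLieSuperBracket grading br) {ι : Type*} {v : ι → L}
    {q : ι → ZMod 2} (hv : ∀ i, v i ∈ grading (q i)) {u : L} {pu : ZMod 2} (hu : u ∈ grading pu)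
    (huv : ∀ i, br u (v i) = 0) (l : List ι) {z : L} {pz : ZMod 2} (hz : z ∈ grading pz) :
    br u (iterBr br z (l.map v)) = iterBr br (br u z) (l.map v) := by
  induction l generalizing z pz with
  | nil => rfl
  | cons i l ih =>
    simp only [List.map_cons, iterBr]
    rw [ih (hL.mem_grading _ _ _ _ hz (hv i)), hL.jacobi _ _ u z _ hu hz, huv, map_zero,
      smul_zero, add_zero]

lemma br_br_right (hL : IsLieSuperBracket grading br) {x y c : L} {px py pc : ZMod 2}
    (hx : x ∈ grading px) (hy : y ∈ grading py) (hc : c ∈ grading pc) :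
    br (br x y) c = sgn R (pc * py) • br (br x c) y + br x (br y c) := by
  rw [hL.skew _ _ _ _ (hL.mem_grading _ _ _ _ hx hy) hc, hL.jacobi _ _ c x y hc hx,
    hL.skew _ _ c x hc hx, hL.skew _ _ c y hc hy]
  simp only [map_smul, LinearMap.smul_apply, smul_add, smul_smul, neg_sgn, ← sgn_add]
  congr 2
  · congr 1
    grind
  · rw [show 1 + (px + py) * pc + (pc * px + (1 + pc * py)) = 0 by grind, sgn_zero, one_smul]

theorem iterBr_br_ofFn (hL : IsLieSuperBracket grading br) {m : ℕ} {v : Fin m → L}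
    {q : Fin m → ZMod 2} (hv : ∀ i, v i ∈ grading (q i)) {x y : L} {px py : ZMod 2}
    (hx : x ∈ grading px) (hy : y ∈ grading py) :
    iterBr br (br x y) (List.ofFn v) = ∑ S : Finset (Fin m),
      sgn R ((∑ j ∈ S, q j) * py + koszulExp q S) •
        br (iterBr br x (S.sort.map v)) (iterBr br y (Sᶜ.sort.map v)) := by
  induction m generalizing x y px py with
  | zero =>
    rw [univ_unique, sum_singleton, show (default : Finset (Fin 0)) = ∅ from rfl]
    simp [koszulExp, iterBr]
  | succ m ih =>
    obtain ⟨b, v, rfl⟩ : ∃ b v', v = Fin.cons b v' := ⟨_, _, (Fin.cons_self_tail v).symm⟩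
    obtain ⟨q₀, q, rfl⟩ : ∃ q₀ q', q = Fin.cons q₀ q' := ⟨_, _, (Fin.cons_self_tail q).symm⟩
    have hb : b ∈ grading q₀ := by simpa using hv 0
    have hv' : ∀ i, v i ∈ grading (q i) := fun i => by simpa using hv i.succ
    rw [List.ofFn_succ, iterBr, Fin.cons_zero, hL.br_br_right hx hy hb, iterBr_add,
      iterBr_smul]
    simp only [Fin.cons_succ]
    rw [ih hv' (hL.mem_grading _ _ _ _ hx hb) hy, ih hv' hx (hL.mem_grading _ _ _ _ hy hb),
      Fin.sum_finset_succ, add_comm, smul_sum]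
    -- `a₀` ends up on the side of `x` exactly for the subsets `S ∋ 0`
    congr 1 <;> refine sum_congr rfl fun T _ => ?_
    · simp only [Fin.compl_map_succEmb, Fin.sort_map_succEmb, Fin.sort_insert_zero_map_succEmb,
        List.map_cons, List.map_map, Fin.cons_comp_succ, Fin.cons_zero, iterBr,
        koszulExp_map_succEmb, sum_map, Fin.coe_succEmb, Fin.cons_succ]
      congr 2
      ring
    · rw [sum_insert (by simp [Fin.succ_ne_zero]), sum_map]
      simp only [Fin.compl_insert_zero_map_succEmb, Fin.sort_map_succEmb,
        Fin.sort_insert_zero_map_succEmb, List.map_cons, List.map_map, Fin.cons_comp_succ,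
        Fin.cons_zero, iterBr, koszulExp_insert_zero_map_succEmb, Fin.coe_succEmb, Fin.cons_succ,
        smul_smul, ← sgn_add]
      congr 2
      ring

lemma br_iterBr_of_mem_range (hL : IsLieSuperBracket grading br) {P : L →ₗ[R] L}
    (habelian : ∀ x y : L, br (P x) (P y) = 0) {ι : Type*} {v : ι → L} {q : ι → ZMod 2}
    (hv : ∀ i, v i ∈ grading (q i)) (hvP : ∀ i, v i ∈ LinearMap.range P) {u : L} {pu : ZMod 2}
    (hu : u ∈ grading pu) (huP : u ∈ LinearMap.range P) (l : List ι) {z : L} {pz : ZMod 2}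
    (hz : z ∈ grading pz) :
    br u (iterBr br z (l.map v)) = -sgn R (pu * pz) • iterBr br (br z u) (l.map v) := by
  have huv : ∀ i, br u (v i) = 0 := fun i => by
    obtain ⟨u', rfl⟩ := huP
    obtain ⟨w, hw⟩ := hvP i
    rw [← hw, habelian]
  rw [hL.br_iterBr_of_br_eq_zero hv hu huv l hz, hL.skew _ _ _ _ hu hz, iterBr_smul]

end IsLieSuperBracket

lemma Finset.sum_map_sort {ι M : Type*} [LinearOrder ι] [AddCommMonoid M] (S : Finset ι)
    (f : ι → M) : (S.sort.map f).sum = ∑ i ∈ S, f i := by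
  rw [← sum_map_toList]
  exact ((S.sort_perm_toList _).map f).sum_eq

lemma Finset.ofFn_orderIsoOfFin {ι α : Type*} [LinearOrder ι] (S : Finset ι) {k : ℕ}
    (h : S.card = k) (a : ι → α) : List.ofFn (fun i => a (S.orderIsoOfFin h i)) = S.sort.map a := by
  rw [List.ofFn_eq_map, ← listMap_orderEmbOfFin_finRange S h, List.map_map]
  rfl

section DerivedBrackets

variable {grading : ZMod 2 → Submodule R L} {br : L →ₗ[R] L →ₗ[R] L} {P : L →ₗ[R] L} {n : ℕ}

lemma jac_dbr_eq_sum (Δ : L) (p : Fin n → ZMod 2) (a : Fin n → L) :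
    Jac R (dbr br P Δ) n p a = ∑ S : Finset (Fin n), sgn R (koszulExp p S) •
      P (iterBr br (br Δ (P (iterBr br Δ (S.sort.map a)))) (Sᶜ.sort.map a)) := by
  refine sum_congr rfl fun S _ => ?_
  simp only [dbr, List.ofFn_succ, Fin.cons_zero, Fin.cons_succ, Finset.ofFn_orderIsoOfFin, iterBr]

lemma sgn_smul_P_br_iterBr_eq_add (hL : IsLieSuperBracket grading br)
    (hPparity : ∀ (i : ZMod 2) (x : L), x ∈ grading i → P x ∈ grading i)
    (habelian : ∀ x y : L, br (P x) (P y) = 0)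
    (hdistrib : ∀ x y : L, P (br x y) = P (br (P x) y) + P (br x (P y)))
    {Δ : L} (hΔ : Δ ∈ grading 1) {p : Fin n → ZMod 2} {a : Fin n → L}
    (haV : ∀ i, a i ∈ LinearMap.range P) (hahom : ∀ i, a i ∈ grading (p i))
    (S : Finset (Fin n)) :
    sgn R ((∑ j ∈ S, p j) * 1 + koszulExp p S) •
        P (br (iterBr br Δ (S.sort.map a)) (iterBr br Δ (Sᶜ.sort.map a)))
      = sgn R (koszulExp p S) •
          P (iterBr br (br Δ (P (iterBr br Δ (S.sort.map a)))) (Sᶜ.sort.map a))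
        + sgn R (koszulExp p Sᶜ) •
          P (iterBr br (br Δ (P (iterBr br Δ (Sᶜ.sort.map a)))) (S.sort.map a)) := by
  have hX : ∀ T : Finset (Fin n), iterBr br Δ (T.sort.map a) ∈ grading (1 + ∑ j ∈ T, p j) :=
    fun T => by
      have hmem := hL.iterBr_mem hahom T.sort hΔ
      rwa [Finset.sum_map_sort] at hmem
  have hPX : ∀ T : Finset (Fin n), P (iterBr br Δ (T.sort.map a)) ∈ grading (1 + ∑ j ∈ T, p j) :=
    fun T => hPparity _ _ (hX T)
  have hpull := fun T U : Finset (Fin n) => hL.br_iterBr_of_mem_range habelian hahom haV (hPX T)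
    (LinearMap.mem_range_self P _) U.sort hΔ
  rw [hdistrib, smul_add, hpull, hL.skew _ _ _ _ (hX S) (hPX Sᶜ), map_smul, hpull]
  simp only [map_smul, smul_smul, neg_sgn, ← sgn_add]
  have hκ := koszulExp_add_koszulExp_compl p S
  congr 3 <;> grind

theorem jac_dbr_eq_dbr_half_br_self [Invertible (2 : R)] (hL : IsLieSuperBracket grading br)
    (hPparity : ∀ (i : ZMod 2) (x : L), x ∈ grading i → P x ∈ grading i)
    (habelian : ∀ x y : L, br (P x) (P y) = 0)
    (hdistrib : ∀ x y : L, P (br x y) = P (br (P x) y) + P (br x (P y)))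
    {Δ : L} (hΔ : Δ ∈ grading 1) (p : Fin n → ZMod 2) (a : Fin n → L)
    (haV : ∀ i, a i ∈ LinearMap.range P) (hahom : ∀ i, a i ∈ grading (p i)) :
    Jac R (dbr br P Δ) n p a = dbr br P (⅟(2 : R) • br Δ Δ) n a := by
  rw [jac_dbr_eq_sum, dbr, iterBr_smul, map_smul, hL.iterBr_br_ofFn hahom hΔ hΔ, map_sum]
  simp only [map_smul, sgn_smul_P_br_iterBr_eq_add hL hPparity habelian hdistrib hΔ haV hahom,
    sum_add_distrib]
  conv_rhs =>
    arg 2; arg 2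
    rw [← Equiv.sum_comp (compl_involutive.toPerm (compl : Finset (Fin n) → _))]
  simp only [Function.Involutive.coe_toPerm, compl_compl]
  rw [← two_smul R, smul_smul, invOf_mul_self, one_smul]

end DerivedBrackets

theorem higher_derived_brackets_jacobi_of_order_le_general
    (R : Type*) [CommRing R] [Invertible (2 : R)]
    (L : Type*) [AddCommGroup L] [Module R L]
    (grading : ZMod 2 → Submodule R L)
    (br : L →ₗ[R] L →ₗ[R] L)
    (hgrade : ∀ (i j : ZMod 2) (a b : L), a ∈ grading i → b ∈ grading j →
      br a b ∈ grading (i + j))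
    (hskew : ∀ (i j : ZMod 2) (a b : L), a ∈ grading i → b ∈ grading j →
      br a b = (-(sgn R (i * j))) • br b a)
    (hjacobi : ∀ (i j : ZMod 2) (a b c : L), a ∈ grading i → b ∈ grading j →
      br a (br b c) = br (br a b) c + (sgn R (i * j)) • br b (br a c))
    (P : L →ₗ[R] L)
    (hPparity : ∀ (i : ZMod 2) (x : L), x ∈ grading i → P x ∈ grading i)
    (habelian : ∀ x y : L, br (P x) (P y) = 0)
    (hdistrib : ∀ x y : L, P (br x y) = P (br (P x) y) + P (br x (P y)))
    (Δ : L) (hΔ : Δ ∈ grading 1)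
    (r : ℕ)
    (horder : ∀ b : Fin (r + 1) → L, (∀ i, b i ∈ LinearMap.range P) →
      iterBr br ((⅟(2 : R)) • br Δ Δ) (List.ofFn b) = 0)
    (n : ℕ) (hn : r + 1 ≤ n) (p : Fin n → ZMod 2) (a : Fin n → L)
    (haV : ∀ i, a i ∈ LinearMap.range P)
    (hahom : ∀ i, a i ∈ grading (p i)) :
    Jac R (dbr br P Δ) n p a = 0 := by
  obtain ⟨k, rfl⟩ := Nat.exists_eq_add_of_le hn
  rw [jac_dbr_eq_dbr_half_br_self ⟨hgrade, hskew, hjacobi⟩ hPparity habelian hdistrib hΔ p a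
    haV hahom, dbr, List.ofFn_add, iterBr_append, horder _ fun i => haV _, iterBr_zero,
    map_zero]

/-- If `Δ² = (1/2)[Δ,Δ]` has order `≤ r` with respect to `V = P(L)`
(every `(r+1)`-fold commutator of `Δ²` with elements of `V` vanishes), then the higher
derived brackets of `Δ` satisfy the generalized Jacobi identities of all orders `n > r`:
`Jⁿ_Δ(a₁,…,aₙ) = 0` for all `n ≥ r+1` and homogeneous `a₁,…,aₙ ∈ V`. -/
theorem higher_derived_brackets_jacobi_of_order_le
    (R : Type*) [CommRing R] [Invertible (2 : R)]
    (L : Type*) [AddCommGroup L] [Module R L]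
    (grading : ZMod 2 → Submodule R L)
    (hdirect : DirectSum.IsInternal grading)
    (br : L →ₗ[R] L →ₗ[R] L)
    (hgrade : ∀ (i j : ZMod 2) (a b : L), a ∈ grading i → b ∈ grading j →
      br a b ∈ grading (i + j))
    (hskew : ∀ (i j : ZMod 2) (a b : L), a ∈ grading i → b ∈ grading j →
      br a b = (-(sgn R (i * j))) • br b a)
    (hjacobi : ∀ (i j : ZMod 2) (a b c : L), a ∈ grading i → b ∈ grading j →
      br a (br b c) = br (br a b) c + (sgn R (i * j)) • br b (br a c))
    (P : L →ₗ[R] L) (hproj : ∀ x, P (P x) = P x)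
    (hPparity : ∀ (i : ZMod 2) (x : L), x ∈ grading i → P x ∈ grading i)
    (habelian : ∀ x y : L, br (P x) (P y) = 0)
    (hdistrib : ∀ x y : L, P (br x y) = P (br (P x) y) + P (br x (P y)))
    (Δ : L) (hΔ : Δ ∈ grading 1)
    (r : ℕ)
    (horder : ∀ b : Fin (r + 1) → L, (∀ i, b i ∈ LinearMap.range P) →
      iterBr br ((⅟(2 : R)) • br Δ Δ) (List.ofFn b) = 0)
    (n : ℕ) (hn : r + 1 ≤ n) (p : Fin n → ZMod 2) (a : Fin n → L)
    (haV : ∀ i, a i ∈ LinearMap.range P)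
    (hahom : ∀ i, a i ∈ grading (p i)) :
    Jac R (dbr br P Δ) n p a = 0 :=
  higher_derived_brackets_jacobi_of_order_le_general R L grading br hgrade hskew hjacobi P hPparity
    habelian hdistrib Δ hΔ r horder n hn p a haV hahom
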